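/- For any real matrix X partitioned in block form as X = [[A, B], [C, D]], where A and D are (not necessarily square) diagonal blocks, one has ‖X‖_* ≥ ‖A‖_* + ‖D‖_*. -/

import Mathlib

open Matrix

theorem Matrix.isHermitian_transpose_mul_self {m n α : Type*} [Fintype m] [CommSemiring α]
    [StarRing α] [TrivialStar α] (A : Matrix m n α) : (Aᵀ * A).IsHermitian := by
  rw [IsHermitian, conjTranspose_mul, conjTranspose_eq_transpose_of_trivial,
    conjTranspose_eq_transpose_of_trivial, transpose_transpose]

/-- The nuclear norm of a real matrix: the sum of its singular values,
i.e. the sum of the square roots of the eigenvalues of `Xᵀ * X`. -/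
noncomputable def nuclearNorm {m n : Type*} [Fintype m] [Fintype n] [DecidableEq n]
    (X : Matrix m n ℝ) : ℝ :=
  ∑ i, Real.sqrt ((Matrix.isHermitian_transpose_mul_self X).eigenvalues i)

/-!
Duality: `‖X‖_* = max {tr (Uᵀ X) : Uᵀ U ≤ 1}`. If `V` diagonalises `Xᵀ X`, the columns of `X V`
are orthogonal with lengths the singular values, so Cauchy–Schwarz column by column bounds
`tr (Uᵀ X) = tr ((U V)ᵀ (X V))` by `‖X‖_*`, and the polar factor `U = X V Σ⁺ Vᵀ` attains it.
For `X = [[A, B], [C, D]]`, the block-diagonal contraction `diag (U_A, U_D)` built from the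
optimal `U_A`, `U_D` pairs with `X` to give `‖A‖_* + ‖D‖_*`, without seeing `B` or `C`.
-/

open scoped MatrixOrder

namespace Matrix

theorem trace_fromBlocks {l m R : Type*} [Fintype l] [Fintype m] [AddCommMonoid R]
    (A : Matrix l l R) (B : Matrix l m R) (C : Matrix m l R) (D : Matrix m m R) :
    (fromBlocks A B C D).trace = A.trace + D.trace := by
  simp [trace, Fintype.sum_sum_type]

theorem PosSemidef.fromBlocks_zero {l m R : Type*} [Fintype l] [Fintype m] [CommRing R]
    [PartialOrder R] [StarRing R] [AddLeftMono R]
    {P : Matrix l l R} {Q : Matrix m m R} (hP : P.PosSemidef) (hQ : Q.PosSemidef) :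
    (fromBlocks P 0 0 Q).PosSemidef := by
  rw [posSemidef_iff_dotProduct_mulVec] at *
  refine ⟨hP.1.fromBlocks (by simp) hQ.1, fun x => ?_⟩
  obtain ⟨a, b, rfl⟩ : ∃ a b, x = Sum.elim a b := ⟨_, _, (Sum.elim_comp_inl_inr x).symm⟩
  simpa [fromBlocks_mulVec, Function.star_sumElim, sumElim_dotProduct_sumElim]
    using add_nonneg (hP.2 a) (hQ.2 b)

variable {m n : Type*} [Fintype m] [Fintype n]

theorem trace_transpose_mul_le_sum_sqrt (P Y : Matrix m n ℝ) :
    (Pᵀ * Y).trace ≤ ∑ k, √((Pᵀ * P) k k) * √((Yᵀ * Y) k k) := by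
  simp only [trace, diag_apply, mul_apply, transpose_apply, ← sq]
  exact Finset.sum_le_sum fun k _ => Real.sum_mul_le_sqrt_mul_sqrt _ _ _

variable [DecidableEq n]

theorem exists_orthogonal_transpose_mul_self_eq_diagonal (X : Matrix m n ℝ) :
    ∃ V : Matrix n n ℝ, V * Vᵀ = 1 ∧ Vᵀ * V = 1 ∧
      (X * V)ᵀ * (X * V) = diagonal (isHermitian_transpose_mul_self X).eigenvalues := by
  set hH := isHermitian_transpose_mul_self X
  have hdiag := hH.conjStarAlgAut_star_eigenvectorUnitary
  rw [Unitary.conjStarAlgAut_star_apply] at hdiag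
  refine ⟨hH.eigenvectorUnitary, ?_, ?_, ?_⟩
  · simpa [star_eq_conjTranspose] using Unitary.coe_mul_star_self hH.eigenvectorUnitary
  · simpa [star_eq_conjTranspose] using Unitary.coe_star_mul_self hH.eigenvectorUnitary
  · simpa [star_eq_conjTranspose, Matrix.mul_assoc] using hdiag

theorem trace_transpose_mul_le_nuclearNorm {U X : Matrix m n ℝ} (hU : Uᵀ * U ≤ 1) :
    (Uᵀ * X).trace ≤ nuclearNorm X := by
  obtain ⟨V, hVVt, hVtV, hY⟩ := exists_orthogonal_transpose_mul_self_eq_diagonal X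
  have hUV : (U * V)ᵀ * (U * V) ≤ 1 := by
    simpa [star_eq_conjTranspose, Matrix.mul_assoc, hVtV] using
      star_left_conjugate_le_conjugate hU V
  calc (Uᵀ * X).trace = ((U * V)ᵀ * (X * V)).trace := by
        rw [transpose_mul, Matrix.mul_assoc, trace_mul_comm Vᵀ, Matrix.mul_assoc,
          Matrix.mul_assoc, hVVt, Matrix.mul_one]
    _ ≤ ∑ k, √(((U * V)ᵀ * (U * V)) k k) * √(((X * V)ᵀ * (X * V)) k k) :=
      trace_transpose_mul_le_sum_sqrt _ _
    _ ≤ ∑ k, 1 * √((isHermitian_transpose_mul_self X).eigenvalues k) := by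
      gcongr with k
      · refine Real.sqrt_le_one.mpr ?_
        simpa using (le_iff.mp hUV).diag_nonneg (i := k)
      · rw [hY, diagonal_apply_eq]
    _ = nuclearNorm X := by simp [nuclearNorm]

theorem exists_transpose_mul_le_one_trace_eq_nuclearNorm (X : Matrix m n ℝ) :
    ∃ U : Matrix m n ℝ, Uᵀ * U ≤ 1 ∧ (Uᵀ * X).trace = nuclearNorm X := by
  obtain ⟨V, hVVt, -, hY⟩ := exists_orthogonal_transpose_mul_self_eq_diagonal X
  set e := (isHermitian_transpose_mul_self X).eigenvalues
  set Y := X * V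
  -- `(√0)⁻¹ = 0`, so `S` is the pseudo-inverse `Σ⁺` and `S Σ² S` is a diagonal 0/1 projection.
  set S := diagonal fun k => (√(e k))⁻¹
  refine ⟨Y * S * Vᵀ, ?_, ?_⟩
  · have hE : S * diagonal e * S ≤ 1 := by
      rw [le_iff, diagonal_mul_diagonal, diagonal_mul_diagonal, ← diagonal_one, diagonal_sub,
        posSemidef_diagonal_iff]
      intro k
      rcases eq_or_ne (√(e k)) 0 with hk | hk
      · simp [hk]
      · rw [← Real.mul_self_sqrt (Real.sqrt_ne_zero'.mp hk).le]
        field_simp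
        simp
    have hUtU : (Y * S * Vᵀ)ᵀ * (Y * S * Vᵀ) = V * (S * diagonal e * S) * Vᵀ := by
      simp only [transpose_mul, transpose_transpose, S, diagonal_transpose, ← hY, Matrix.mul_assoc]
    rw [hUtU]
    simpa [star_eq_conjTranspose, hVVt] using star_left_conjugate_le_conjugate hE Vᵀ
  · calc ((Y * S * Vᵀ)ᵀ * X).trace = (V * (S * Yᵀ * X)).trace := by
          simp only [transpose_mul, transpose_transpose, S, diagonal_transpose, Matrix.mul_assoc]
      _ = (S * (Yᵀ * Y)).trace := by
          rw [trace_mul_comm]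
          simp only [Y, Matrix.mul_assoc]
      _ = nuclearNorm X := by
          rw [hY, diagonal_mul_diagonal, trace_diagonal]
          exact Finset.sum_congr rfl fun k _ => by rw [inv_mul_eq_div, Real.div_sqrt]

theorem fromBlocks_transpose_mul_self_le_one {m₁ m₂ n₁ n₂ : Type*} [Fintype m₁] [Fintype m₂]
    [Fintype n₁] [Fintype n₂] [DecidableEq n₁] [DecidableEq n₂]
    {U₁ : Matrix m₁ n₁ ℝ} {U₂ : Matrix m₂ n₂ ℝ} (h₁ : U₁ᵀ * U₁ ≤ 1) (h₂ : U₂ᵀ * U₂ ≤ 1) :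
    (fromBlocks U₁ 0 0 U₂)ᵀ * fromBlocks U₁ 0 0 U₂ ≤ 1 := by
  rw [le_iff] at *
  simpa [fromBlocks_transpose, fromBlocks_multiply, ← fromBlocks_one, sub_eq_add_neg,
    fromBlocks_neg, fromBlocks_add] using PosSemidef.fromBlocks_zero h₁ h₂

end Matrix

/-- For a block-partitioned matrix `X = [[A, B], [C, D]]`,
`‖X‖_* ≥ ‖A‖_* + ‖D‖_*`. -/
theorem stmt4 (p₁ p₂ q₁ q₂ : ℕ)
    (A : Matrix (Fin p₁) (Fin q₁) ℝ) (B : Matrix (Fin p₁) (Fin q₂) ℝ)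
    (C : Matrix (Fin p₂) (Fin q₁) ℝ) (D : Matrix (Fin p₂) (Fin q₂) ℝ) :
    nuclearNorm A + nuclearNorm D ≤ nuclearNorm (Matrix.fromBlocks A B C D) := by
  obtain ⟨UA, hUA, hA⟩ := exists_transpose_mul_le_one_trace_eq_nuclearNorm A
  obtain ⟨UD, hUD, hD⟩ := exists_transpose_mul_le_one_trace_eq_nuclearNorm D
  calc nuclearNorm A + nuclearNorm D
      = ((fromBlocks UA 0 0 UD)ᵀ * fromBlocks A B C D).trace := by
        simp [fromBlocks_transpose, fromBlocks_multiply, trace_fromBlocks, hA, hD]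
    _ ≤ _ := trace_transpose_mul_le_nuclearNorm (fromBlocks_transpose_mul_self_le_one hUA hUD)
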